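/- arXiv:1801.04717 — 3 statements merged into one kernel-verified Lean document; each statement's English description precedes it below -/
import Mathlib

section
/- The equation (28^n - 1)(49^n - 1) = x^2 has exactly one solution in positive integers n, x, namely n = 1, x = 36. -/
/-!
Since `n = 0` solves the equation, no congruence can rule out the class `n ≡ 0 (mod 4)`; there,
lifting the exponent at 5 (with `28⁴ ≡ 49⁴ ≡ 1 (mod 5)`) gives
`v₅((28ⁿ - 1)(49ⁿ - 1)) = (1 + v₅ n) + (2 + v₅ n)`, which is odd. Every other `n ≠ 1` is excluded
by a modulus at which the left side is not a square: 5 for `n ≡ 3 (mod 4)`, 64 for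
`n ≡ 2 (mod 4)`, 128 for `n ≡ 1 (mod 8)`, and 13, 17 or 193 for `n ≡ 5 (mod 8)`. Modulo a power
of 2 the base 28 is nilpotent, so `28ⁿ` is only eventually periodic there.
-/

theorem pow_add_eq_pow_of_pow_add_eq {M : Type*} [Monoid M] {a : M} {e P j : ℕ}
    (ha : a ^ (e + P) = a ^ e) (hj : e ≤ j) : a ^ (j + P) = a ^ j := by
  obtain ⟨i, rfl⟩ := Nat.exists_eq_add_of_le hj
  rw [add_right_comm, pow_add, ha, ← pow_add]

theorem pow_add_mul_eq_pow_of_pow_add_eq {M : Type*} [Monoid M] {a : M} {e P m : ℕ}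
    (ha : a ^ (e + P) = a ^ e) (hm : e ≤ m) (k : ℕ) : a ^ (m + P * k) = a ^ m := by
  induction k with
  | zero => simp
  | succ k ih => rw [mul_add_one, ← add_assoc, pow_add_eq_pow_of_pow_add_eq ha (by omega), ih]

theorem pow_eq_pow_of_modEq_of_pow_add_eq {M : Type*} [Monoid M] {a : M} {e P m n : ℕ}
    (ha : a ^ (e + P) = a ^ e) (hm : e ≤ m) (hn : e ≤ n) (hmn : m ≡ n [MOD P]) :
    a ^ m = a ^ n := by
  wlog hle : m ≤ n generalizing m n
  · exact (this hn hm hmn.symm (by omega)).symm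
  obtain ⟨k, hk⟩ := (Nat.modEq_iff_dvd' hle).mp hmn
  obtain rfl : n = m + P * k := by omega
  exact (pow_add_mul_eq_pow_of_pow_add_eq ha hm k).symm

theorem ne_sq_of_not_isSquare_cast {R : Type*} [CommRing R] {a b n x : ℕ} (ha : 0 < a)
    (hb : 0 < b) (h : ¬IsSquare (((a : R) ^ n - 1) * ((b : R) ^ n - 1))) :
    (a ^ n - 1) * (b ^ n - 1) ≠ x ^ 2 := by
  intro hx
  refine h ⟨x, ?_⟩
  have := congrArg (Nat.cast : ℕ → R) hx
  push_cast [Nat.one_le_pow _ _ ha, Nat.one_le_pow _ _ hb] at this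
  rw [this, sq]

theorem ne_sq_of_modEq {R : Type*} [CommRing R] {a b e P r n x : ℕ} (ha : 0 < a) (hb : 0 < b)
    (hpa : (a : R) ^ (e + P) = (a : R) ^ e) (hpb : (b : R) ^ (e + P) = (b : R) ^ e)
    (hr : ¬IsSquare (((a : R) ^ r - 1) * ((b : R) ^ r - 1))) (her : e ≤ r) (hen : e ≤ n)
    (hnr : n ≡ r [MOD P]) : (a ^ n - 1) * (b ^ n - 1) ≠ x ^ 2 := by
  refine ne_sq_of_not_isSquare_cast (R := R) ha hb ?_
  rwa [pow_eq_pow_of_modEq_of_pow_add_eq hpa hen her hnr,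
    pow_eq_pow_of_modEq_of_pow_add_eq hpb hen her hnr]

theorem ne_sq_of_odd_padicValNat {p m x : ℕ} [Fact p.Prime] (h : Odd (padicValNat p m)) :
    m ≠ x ^ 2 := by
  rintro rfl
  rw [padicValNat.pow] at h
  exact Nat.not_odd_iff_even.mpr (even_two_mul _) h

theorem padicValNat_pow_sub_one {p a k n : ℕ} [Fact p.Prime] (hp : Odd p) (ha : 1 < a)
    (hpk : p ∣ a ^ k - 1) (hk : ¬p ∣ k) (hkn : k ∣ n) (hn : n ≠ 0) :
    padicValNat p (a ^ n - 1) = padicValNat p (a ^ k - 1) + padicValNat p n := by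
  obtain ⟨m, rfl⟩ := hkn
  have hk0 : k ≠ 0 := left_ne_zero_of_mul hn
  have hm0 : m ≠ 0 := right_ne_zero_of_mul hn
  have hak : 1 < a ^ k := Nat.one_lt_pow hk0 ha
  have hpa : ¬p ∣ a ^ k := fun h ↦ (Fact.out : p.Prime).not_dvd_one <| by
    simpa [Nat.sub_sub_self hak.le] using Nat.dvd_sub h hpk
  rw [show a ^ (k * m) - 1 = (a ^ k) ^ m - 1 ^ m by rw [pow_mul, one_pow],
    padicValNat.pow_sub_pow hp hak hpk hpa hm0, padicValNat.mul hk0 hm0,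
    padicValNat.eq_zero_of_not_dvd hk, zero_add]

theorem padicValNat_eq_of_dvd_of_not_dvd {p k n : ℕ} [Fact p.Prime] (hn : n ≠ 0)
    (hk : p ^ k ∣ n) (hk1 : ¬p ^ (k + 1) ∣ n) : padicValNat p n = k := by
  rw [padicValNat_dvd_iff_le hn] at hk hk1
  omega

section

variable {n x : ℕ}

theorem padicValNat_five_pow_sub_one_mul_pow_sub_one (hn : 4 ∣ n) (hn0 : n ≠ 0) :
    padicValNat 5 ((28 ^ n - 1) * (49 ^ n - 1)) = 2 * padicValNat 5 n + 3 := by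
  have : Fact (Nat.Prime 5) := ⟨Nat.prime_five⟩
  have h5 : Odd 5 := by decide
  have h28 : padicValNat 5 (28 ^ n - 1) = 1 + padicValNat 5 n := by
    rw [padicValNat_pow_sub_one (k := 4) h5 (by norm_num) (by norm_num) (by norm_num) hn hn0,
      padicValNat_eq_of_dvd_of_not_dvd (k := 1) (by norm_num) (by norm_num) (by norm_num)]
  have h49 : padicValNat 5 (49 ^ n - 1) = 2 + padicValNat 5 n := by
    rw [padicValNat_pow_sub_one (k := 4) h5 (by norm_num) (by norm_num) (by norm_num) hn hn0,
      padicValNat_eq_of_dvd_of_not_dvd (k := 2) (by norm_num) (by norm_num) (by norm_num)]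
  have hpos : ∀ a : ℕ, 1 < a → a ^ n - 1 ≠ 0 := fun a ha ↦
    Nat.sub_ne_zero_of_lt (Nat.one_lt_pow hn0 ha)
  rw [padicValNat.mul (hpos 28 (by norm_num)) (hpos 49 (by norm_num)), h28, h49]
  ring

theorem ne_sq_of_mod_four_eq_zero (hn : n % 4 = 0) (hn0 : n ≠ 0) :
    (28 ^ n - 1) * (49 ^ n - 1) ≠ x ^ 2 := by
  have : Fact (Nat.Prime 5) := ⟨Nat.prime_five⟩
  refine ne_sq_of_odd_padicValNat (p := 5) ?_
  rw [padicValNat_five_pow_sub_one_mul_pow_sub_one (Nat.dvd_of_mod_eq_zero hn) hn0]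
  exact ⟨padicValNat 5 n + 1, by ring⟩

theorem ne_sq_of_mod_four_eq_three (hn : n % 4 = 3) : (28 ^ n - 1) * (49 ^ n - 1) ≠ x ^ 2 :=
  ne_sq_of_modEq (R := ZMod 5) (e := 0) (P := 4) (r := 3) (by norm_num) (by norm_num)
    (by decide) (by decide) (by decide) (Nat.zero_le _) n.zero_le hn

set_option maxRecDepth 10000 in
theorem ne_sq_of_mod_four_eq_two (hn : n % 4 = 2) : (28 ^ n - 1) * (49 ^ n - 1) ≠ x ^ 2 := by
  obtain rfl | hn3 : n = 2 ∨ 3 ≤ n := by omega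
  · exact ne_sq_of_not_isSquare_cast (R := ZMod 64) (by norm_num) (by norm_num) (by decide)
  · exact ne_sq_of_modEq (R := ZMod 64) (e := 3) (P := 4) (r := 6) (by norm_num) (by norm_num)
      (by decide) (by decide) (by decide) (by norm_num) hn3 hn

set_option maxRecDepth 10000 in
theorem ne_sq_of_mod_eight_eq_one (hn : n % 8 = 1) (hn1 : n ≠ 1) :
    (28 ^ n - 1) * (49 ^ n - 1) ≠ x ^ 2 :=
  ne_sq_of_modEq (R := ZMod 128) (e := 4) (P := 8) (r := 9) (by norm_num) (by norm_num)
    (by decide) (by decide) (by decide) (by norm_num) (by omega) hn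

set_option maxRecDepth 10000 in
theorem ne_sq_of_mod_eight_eq_five (hn : n % 8 = 5) : (28 ^ n - 1) * (49 ^ n - 1) ≠ x ^ 2 := by
  obtain h | h | h | h : n % 12 = 5 ∨ n % 12 = 9 ∨ n % 16 = 13 ∨ n % 48 = 37 := by omega
  · exact ne_sq_of_modEq (R := ZMod 13) (e := 0) (P := 12) (r := 5) (by norm_num) (by norm_num)
      (by decide) (by decide) (by decide) (Nat.zero_le _) n.zero_le h
  · exact ne_sq_of_modEq (R := ZMod 13) (e := 0) (P := 12) (r := 9) (by norm_num) (by norm_num)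
      (by decide) (by decide) (by decide) (Nat.zero_le _) n.zero_le h
  · exact ne_sq_of_modEq (R := ZMod 17) (e := 0) (P := 16) (r := 13) (by norm_num) (by norm_num)
      (by decide) (by decide) (by decide) (Nat.zero_le _) n.zero_le h
  · exact ne_sq_of_modEq (R := ZMod 193) (e := 0) (P := 48) (r := 37) (by norm_num)
      (by norm_num) (by decide) (by decide) (by decide) (Nat.zero_le _) n.zero_le h

end

theorem stmt_4_general (n x : ℕ) (hn : 0 < n) :
    (28 ^ n - 1) * (49 ^ n - 1) = x ^ 2 ↔ n = 1 ∧ x = 36 := by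
  refine ⟨fun h ↦ ?_, by rintro ⟨rfl, rfl⟩; norm_num⟩
  obtain rfl | hn1 := eq_or_ne n 1
  · exact ⟨rfl, Nat.pow_left_injective two_ne_zero (by simpa using h.symm)⟩
  exfalso
  revert h
  obtain h | h | h | h | h :
      n % 4 = 0 ∨ n % 4 = 2 ∨ n % 4 = 3 ∨ n % 8 = 1 ∨ n % 8 = 5 := by omega
  · exact ne_sq_of_mod_four_eq_zero h hn.ne'
  · exact ne_sq_of_mod_four_eq_two h
  · exact ne_sq_of_mod_four_eq_three h
  · exact ne_sq_of_mod_eight_eq_one h hn1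
  · exact ne_sq_of_mod_eight_eq_five h

theorem stmt_4 (n x : ℕ) (hn : 0 < n) (hx : 0 < x) :
    (28 ^ n - 1) * (49 ^ n - 1) = x ^ 2 ↔ n = 1 ∧ x = 36 :=
  stmt_4_general n x hn
end

section
/- The equation (45^n - 1)(100^n - 1) = x^2 has exactly one solution in positive integers n, x, namely n = 1, x = 66. -/
/-!
For odd `n ≥ 3` the equation already fails locally: modulo `32`, where `100 ^ n` vanishes, unless
`n ≡ 5 [MOD 8]`, and in that case by Euler's criterion modulo `7`, `73` or `109`, depending on
`n % 216`. The case `n = 2` fails modulo `7`.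

For even `n = 2 * t` with `t ≥ 2`, write `45 ^ n - 1 = d * a ^ 2` and `100 ^ n - 1 = d * b ^ 2`
with a common `d`, which is not a square. Then `(45 ^ t, a)` and `(100 ^ t, b)` solve
`X ^ 2 - d * Y ^ 2 = 1`, so they are powers `u ^ j` and `u ^ k` of the fundamental solution.
Lifting the exponent along the sequence `X m = (u ^ m).x` gives `v₅ (X k) ≤ v₅ (X j) + v₅ k`
whenever `5` divides both, that is `2 * t ≤ t + v₅ k`, so `5 ^ t ≤ k`; but then
`100 ^ t = X k ≥ 2 ^ k ≥ 2 ^ 5 ^ t`, which is false.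
-/

theorem Nat.cast_pow_sub_one_mul_pow_sub_one {R : Type*} [CommRing R] {a b : ℕ} (ha : 0 < a)
    (hb : 0 < b) (n : ℕ) :
    (((a ^ n - 1) * (b ^ n - 1) : ℕ) : R) = ((a : R) ^ n - 1) * ((b : R) ^ n - 1) := by
  push_cast [Nat.one_le_pow n a ha, Nat.one_le_pow n b hb]
  ring

theorem ZMod.not_isSquare_of_pow_div_two_eq_neg_one {p : ℕ} [Fact p.Prime] (hp : p ≠ 2)
    {a : ZMod p} (h : a ^ (p / 2) = -1) : ¬IsSquare a := by
  have : Fact (2 < p) := ⟨lt_of_le_of_ne (Fact.out : p.Prime).two_le (Ne.symm hp)⟩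
  intro ha
  have ha0 : a ≠ 0 := by
    rintro rfl
    rw [zero_pow (by have := this.out; omega)] at h
    exact one_ne_zero (neg_eq_zero.1 h.symm)
  exact ZMod.neg_one_ne_one (h.symm.trans ((ZMod.euler_criterion p ha0).1 ha))

theorem pow_sub_one_mul_pow_sub_one_ne_sq_of_pow_div_two_eq_neg_one {p a b n x : ℕ}
    (hp : p.Prime) (hp2 : p ≠ 2) (ha : (a : ZMod p) ≠ 0) (hb : (b : ZMod p) ≠ 0)
    (h : (((a : ZMod p) ^ (n % (p - 1)) - 1) * ((b : ZMod p) ^ (n % (p - 1)) - 1)) ^ (p / 2) = -1) :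
    (a ^ n - 1) * (b ^ n - 1) ≠ x ^ 2 := by
  have := Fact.mk hp
  intro hx
  refine ZMod.not_isSquare_of_pow_div_two_eq_neg_one hp2 h ⟨x, ?_⟩
  have hpos (c : ℕ) (hc : (c : ZMod p) ≠ 0) : 0 < c :=
    Nat.pos_of_ne_zero (by rintro rfl; simp at hc)
  rw [← pow_eq_pow_mod n (ZMod.pow_card_sub_one_eq_one ha),
    ← pow_eq_pow_mod n (ZMod.pow_card_sub_one_eq_one hb),
    ← Nat.cast_pow_sub_one_mul_pow_sub_one (hpos a ha) (hpos b hb), hx]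
  push_cast
  ring

set_option maxRecDepth 4000 in
theorem forty_five_hundred_ne_sq_of_odd {n x : ℕ} (hn : 3 ≤ n) (hodd : Odd n) :
    (45 ^ n - 1) * (100 ^ n - 1) ≠ x ^ 2 := by
  rcases eq_or_ne (n % 8) 5 with h8 | h8
  · have key (p : ℕ) (hp : p.Prime) (hp2 : p ≠ 2) (hdvd : p - 1 ∣ 216)
        (h45 : (45 : ZMod p) ≠ 0) (h100 : (100 : ZMod p) ≠ 0)
        (h : (((45 : ZMod p) ^ (n % 216 % (p - 1)) - 1) *
          ((100 : ZMod p) ^ (n % 216 % (p - 1)) - 1)) ^ (p / 2) = -1) :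
        (45 ^ n - 1) * (100 ^ n - 1) ≠ x ^ 2 := by
      rw [Nat.mod_mod_of_dvd n hdvd] at h
      exact pow_sub_one_mul_pow_sub_one_ne_sq_of_pow_div_two_eq_neg_one hp hp2
        (by exact_mod_cast h45) (by exact_mod_cast h100) (by exact_mod_cast h)
    have cover : ∀ r < 216, r % 8 = 5 →
        (((45 : ZMod 7) ^ (r % 6) - 1) * ((100 : ZMod 7) ^ (r % 6) - 1)) ^ 3 = -1 ∨
        (((45 : ZMod 73) ^ (r % 72) - 1) * ((100 : ZMod 73) ^ (r % 72) - 1)) ^ 36 = -1 ∨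
        (((45 : ZMod 109) ^ (r % 108) - 1) * ((100 : ZMod 109) ^ (r % 108) - 1)) ^ 54 = -1 := by
      decide
    rcases cover (n % 216) (Nat.mod_lt _ (by norm_num)) (by omega) with h | h | h
    exacts [key 7 (by norm_num) (by norm_num) (by norm_num) (by decide) (by decide) h,
      key 73 (by norm_num) (by norm_num) (by norm_num) (by decide) (by decide) h,
      key 109 (by norm_num) (by norm_num) (by norm_num) (by decide) (by decide) h]
  · intro h
    have h32 := congrArg (Nat.cast : ℕ → ZMod 32) h
    rw [Nat.cast_pow_sub_one_mul_pow_sub_one (by norm_num) (by norm_num)] at h32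
    push_cast at h32
    rw [pow_eq_pow_mod n (by decide : (45 : ZMod 32) ^ 8 = 1),
      pow_eq_zero_of_le hn (by decide : (100 : ZMod 32) ^ 3 = 0)] at h32
    have cover : ∀ r < 8, r % 2 = 1 → r ≠ 5 →
        ∀ z : ZMod 32, ((45 : ZMod 32) ^ r - 1) * (0 - 1) ≠ z ^ 2 := by
      decide
    exact cover (n % 8) (Nat.mod_lt _ (by norm_num)) (by rw [Nat.odd_iff] at hodd; omega) h8 _ h32

theorem Nat.exists_eq_mul_sq_of_mul_eq_sq {a b c : ℕ} (h : a * b = c ^ 2) :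
    ∃ d e f, a = d * e ^ 2 ∧ b = d * f ^ 2 := by
  obtain ⟨a', b', hco, ha, hb⟩ := Nat.exists_coprime a b
  set g := Nat.gcd a b
  rcases Nat.eq_zero_or_pos g with hg | hg
  · exact ⟨0, 0, 0, by simp [ha, hg], by simp [hb, hg]⟩
  obtain ⟨c', rfl⟩ : g ∣ c :=
    (Nat.pow_dvd_pow_iff two_ne_zero).1 ⟨a' * b', by rw [← h, ha, hb]; ring⟩
  have hab : a' * b' = c' ^ 2 := by
    have : g ^ 2 * (a' * b') = g ^ 2 * c' ^ 2 := by rw [← mul_pow, ← h, ha, hb]; ring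
    exact Nat.eq_of_mul_eq_mul_left (by positivity) this
  have hunit : IsUnit (gcd a' b') := by rw [Nat.isUnit_iff]; exact hco
  obtain ⟨e, rfl⟩ := exists_eq_pow_of_mul_eq_pow hunit hab
  obtain ⟨f, rfl⟩ := exists_eq_pow_of_mul_eq_pow (by rw [Nat.isUnit_iff]; exact hco.symm)
    ((mul_comm _ _).trans hab)
  exact ⟨g, e, f, by rw [ha, mul_comm], by rw [hb, mul_comm]⟩

theorem Nat.not_isSquare_sq_sub_one {m : ℕ} (hm : 1 < m) : ¬IsSquare (m ^ 2 - 1) := by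
  obtain ⟨n, rfl⟩ : ∃ n, m = n + 2 := ⟨m - 2, by omega⟩
  rintro ⟨r, hr⟩
  exact Nat.not_exists_sq (m := n + 1) (by ring_nf; omega) (by ring_nf; omega) ⟨r, hr.symm⟩

theorem exists_pell_solutions_of_mul_eq_sq {M N x : ℕ} (hM : 0 < M) (hN : 1 < N)
    (h : (M ^ 2 - 1) * (N ^ 2 - 1) = x ^ 2) :
    ∃ d a b : ℕ, 0 < (d : ℤ) ∧ ¬IsSquare (d : ℤ) ∧
      (M : ℤ) ^ 2 - d * a ^ 2 = 1 ∧ (N : ℤ) ^ 2 - d * b ^ 2 = 1 := by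
  obtain ⟨d, a, b, ha, hb⟩ := Nat.exists_eq_mul_sq_of_mul_eq_sq h
  have hM' : d * a ^ 2 + 1 = M ^ 2 := by have := Nat.one_le_pow 2 M hM; omega
  have hN' : d * b ^ 2 + 1 = N ^ 2 := by have := Nat.one_lt_pow two_ne_zero hN; omega
  refine ⟨d, a, b, ?_, ?_, ?_, ?_⟩
  · have := Nat.one_lt_pow two_ne_zero hN
    exact_mod_cast Nat.pos_of_ne_zero (by rintro rfl; omega)
  · rw [Int.isSquare_natCast_iff]
    exact fun hd => Nat.not_isSquare_sq_sub_one hN (hb ▸ hd.mul (IsSquare.sq b))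
  · rw [← Nat.cast_pow, ← hM']; push_cast; ring
  · rw [← Nat.cast_pow, ← hN']; push_cast; ring

theorem padicValInt_add_of_dvd {p : ℕ} [Fact p.Prime] {a b : ℤ} (ha : a ≠ 0)
    (hb : (p : ℤ) ^ (padicValInt p a + 1) ∣ b) : padicValInt p (a + b) = padicValInt p a := by
  have hnot : ¬(p : ℤ) ^ (padicValInt p a + 1) ∣ a + b := fun h => by
    rcases (padicValInt_dvd_iff _ a).1 ((dvd_add_left hb).1 h) with h | h
    exacts [ha h, by omega]
  have hdvd : (p : ℤ) ^ padicValInt p a ∣ a + b :=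
    dvd_add (padicValInt_dvd a) ((pow_dvd_pow _ (Nat.le_succ _)).trans hb)
  rcases (padicValInt_dvd_iff _ _).1 hdvd with h | h
  · exact absurd (h ▸ dvd_zero _) hnot
  · have := mt (padicValInt_dvd_iff _ _).2 hnot
    omega

theorem padicValNat_prime_pow_mul {p : ℕ} [Fact p.Prime] {w : ℕ} (hw : ¬p ∣ w) (t : ℕ) :
    padicValNat p (p ^ t * w) = t := by
  rw [padicValNat.mul (pow_ne_zero _ (Fact.out : p.Prime).ne_zero) (by rintro rfl; simp at hw),
    padicValNat.prime_pow, padicValNat.eq_zero_of_not_dvd hw, add_zero]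

namespace Pell

namespace Solution₁

variable {d : ℤ} (u : Solution₁ d)

theorem x_pow_add_two_mul_add_x_pow (a b : ℕ) :
    (u ^ (a + 2 * b)).x + (u ^ a).x = 2 * (u ^ b).x * (u ^ (a + b)).x := by
  have h₁ : u ^ (a + 2 * b) = u ^ (a + b) * u ^ b := by rw [← pow_add]; ring_nf
  have h₂ : u ^ a = u ^ (a + b) * (u ^ b)⁻¹ := by rw [pow_add, mul_inv_cancel_right]
  rw [h₁, h₂, x_mul, x_mul, x_inv, y_inv]
  ring

/-- `(u ^ (r * s)).x` is the Chebyshev polynomial `T s` evaluated at `z = (u ^ r).x`; for odd `s`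
it is `± s * z` modulo `z ^ 3`. The `y`-coordinate is carried along to make the induction work. -/
theorem exists_pow_mul_odd_eq (r q : ℕ) : ∃ E F : ℤ,
    (u ^ (r * (2 * q + 1))).x = (-1) ^ q * ((2 * q + 1 : ℕ) : ℤ) * (u ^ r).x + (u ^ r).x ^ 3 * E ∧
    (u ^ (r * (2 * q + 1))).y = (-1) ^ q * (u ^ r).y + (u ^ r).x ^ 2 * F := by
  induction q with
  | zero => exact ⟨0, 0, by simp, by simp⟩
  | succ q ih =>
    obtain ⟨E, F, hE, hF⟩ := ih
    have hpow : u ^ (r * (2 * (q + 1) + 1)) = u ^ (r * (2 * q + 1)) * (u ^ r * u ^ r) := by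
      rw [← pow_add, ← pow_add]; ring_nf
    set z := (u ^ r).x
    set w := (u ^ r).y
    have hzw : z ^ 2 - d * w ^ 2 = 1 := (u ^ r).prop
    refine ⟨2 * (-1) ^ q * (2 * q + 2) + (2 * z ^ 2 - 1) * E + 2 * d * w * F,
      2 * (-1) ^ q * (2 * q + 2) * w + 2 * z ^ 2 * E * w + (2 * z ^ 2 - 1) * F, ?_, ?_⟩
    · rw [hpow, x_mul, x_mul, y_mul, hE, hF]
      push_cast
      linear_combination (-((-1) ^ q * (2 * q + 1) * z + z ^ 3 * E + 2 * (-1) ^ q * z)) * hzw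
    · rw [hpow, y_mul, x_mul, y_mul, hE, hF]
      push_cast
      linear_combination (-((-1) ^ q * w + z ^ 2 * F)) * hzw

variable {p : ℕ} [Fact p.Prime]

theorem ne_zero_of_dvd_x_pow {m : ℕ} (hm : (p : ℤ) ∣ (u ^ m).x) : m ≠ 0 := by
  rintro rfl
  exact (Fact.out : p.Prime).one_lt.ne' (by simpa [Int.natCast_dvd_ofNat] using hm)

theorem padicValInt_x_pow_mul_odd_of_lt {r : ℕ} (hx : (u ^ r).x ≠ 0) (q : ℕ)
    (h : padicValNat p (2 * q + 1) < 2 * padicValInt p (u ^ r).x) :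
    padicValInt p (u ^ (r * (2 * q + 1))).x =
      padicValInt p (u ^ r).x + padicValNat p (2 * q + 1) := by
  obtain ⟨E, -, hE, -⟩ := u.exists_pow_mul_odd_eq r q
  set z := (u ^ r).x
  have hs : ((2 * q + 1 : ℕ) : ℤ) ≠ 0 := by positivity
  have hsign : ((-1) ^ q : ℤ) ≠ 0 := by positivity
  have hlead : padicValInt p ((-1) ^ q * ((2 * q + 1 : ℕ) : ℤ) * z) =
      padicValNat p (2 * q + 1) + padicValInt p z := by
    rw [padicValInt.mul (mul_ne_zero hsign hs) hx, padicValInt.mul hsign hs, padicValInt.of_nat]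
    simp [padicValInt, Int.natAbs_pow]
  have htail : (p : ℤ) ^ (padicValInt p ((-1) ^ q * ((2 * q + 1 : ℕ) : ℤ) * z) + 1) ∣ z ^ 3 * E :=
    calc (p : ℤ) ^ (padicValInt p ((-1) ^ q * ((2 * q + 1 : ℕ) : ℤ) * z) + 1)
        ∣ ((p : ℤ) ^ padicValInt p z) ^ 3 := by
          rw [hlead, ← pow_mul]; exact pow_dvd_pow _ (by omega)
      _ ∣ z ^ 3 * E := (pow_dvd_pow_of_dvd (padicValInt_dvd z) 3).mul_right E
  rw [hE, padicValInt_add_of_dvd (mul_ne_zero (mul_ne_zero hsign hs) hx) htail, hlead, add_comm]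

/-- Lifting the exponent: with `s = p ^ α * s₀` and `p ∤ s₀`, the factor `s₀` keeps the valuation
and each factor `p` raises it by one. -/
theorem padicValInt_x_pow_mul_odd (hp : p ≠ 2) (hx : 0 < u.x) {r s : ℕ}
    (hr : (p : ℤ) ∣ (u ^ r).x) (hs : Odd s) :
    padicValInt p (u ^ (r * s)).x = padicValInt p (u ^ r).x + padicValNat p s := by
  have hx' (m : ℕ) : (u ^ m).x ≠ 0 := (x_pow_pos hx m).ne'
  have hv : 1 ≤ padicValInt p (u ^ r).x :=
    ((padicValInt_dvd_iff 1 _).1 (by rwa [pow_one])).resolve_left (hx' r)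
  obtain ⟨q, hq⟩ : Odd p := (Fact.out : p.Prime).odd_of_ne_two hp
  obtain ⟨α, s₀, hps₀, rfl⟩ := Nat.exists_eq_pow_mul_and_not_dvd hs.pos.ne' p
    (Fact.out : p.Prime).one_lt.ne'
  obtain ⟨q₀, rfl⟩ := (Nat.odd_mul.1 hs).2
  rw [padicValNat_prime_pow_mul hps₀]
  clear hs
  induction α with
  | zero =>
    rw [pow_zero, one_mul, u.padicValInt_x_pow_mul_odd_of_lt (hx' r) q₀ (by
      rw [padicValNat.eq_zero_of_not_dvd hps₀]; omega), padicValNat.eq_zero_of_not_dvd hps₀]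
  | succ α ih =>
    have hidx : r * (p ^ (α + 1) * (2 * q₀ + 1)) = r * (p ^ α * (2 * q₀ + 1)) * (2 * q + 1) := by
      rw [← hq]; ring
    rw [hidx,
      u.padicValInt_x_pow_mul_odd_of_lt (hx' _) q (by rw [← hq, padicValNat_self, ih]; omega),
      ih, ← hq, padicValNat_self, add_assoc]

/-- By `x_pow_add_two_mul_add_x_pow`, `p ∣ (u ^ m).x` is `2 * ρ`-periodic in `m` and symmetric
about `ρ`, so the least such `ρ` leaves only `m ≡ ρ [MOD 2 * ρ]`. -/
theorem mod_two_mul_eq_of_dvd_x_pow {ρ m : ℕ} (hρ : (p : ℤ) ∣ (u ^ ρ).x)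
    (hmin : ∀ m < ρ, ¬(p : ℤ) ∣ (u ^ m).x) (hm : (p : ℤ) ∣ (u ^ m).x) : m % (2 * ρ) = ρ := by
  have hρ0 : ρ ≠ 0 := u.ne_zero_of_dvd_x_pow hρ
  have hshift (a q : ℕ) : (p : ℤ) ∣ (u ^ (a + 2 * ρ * q)).x ↔ (p : ℤ) ∣ (u ^ a).x := by
    induction q with
    | zero => simp
    | succ q ih =>
      have hsum : (p : ℤ) ∣ (u ^ (a + 2 * ρ * q + 2 * ρ)).x + (u ^ (a + 2 * ρ * q)).x := by
        rw [x_pow_add_two_mul_add_x_pow]; exact (hρ.mul_left 2).mul_right _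
      rw [← ih, show a + 2 * ρ * (q + 1) = a + 2 * ρ * q + 2 * ρ by ring]
      exact ⟨fun h => (dvd_add_right h).1 hsum, fun h => (dvd_add_left h).1 hsum⟩
  have hr : (p : ℤ) ∣ (u ^ (m % (2 * ρ))).x := by
    rwa [← hshift _ (m / (2 * ρ)), Nat.mod_add_div]
  have hlt : m % (2 * ρ) < 2 * ρ := Nat.mod_lt _ (by omega)
  rcases lt_trichotomy (m % (2 * ρ)) ρ with h | h | h
  · exact absurd hr (hmin _ h)
  · exact h
  · set r := m % (2 * ρ)
    have hsum : (p : ℤ) ∣ (u ^ r).x + (u ^ (2 * ρ - r)).x := by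
      have := u.x_pow_add_two_mul_add_x_pow (2 * ρ - r) (r - ρ)
      rw [show 2 * ρ - r + 2 * (r - ρ) = r by omega, show 2 * ρ - r + (r - ρ) = ρ by omega] at this
      rw [this]; exact hρ.mul_left _
    exact absurd ((dvd_add_right hr).1 hsum) (hmin _ (by omega))

theorem padicValInt_x_pow_le (hp : p ≠ 2) (hx : 0 < u.x) {j k : ℕ}
    (hj : (p : ℤ) ∣ (u ^ j).x) (hk : (p : ℤ) ∣ (u ^ k).x) :
    padicValInt p (u ^ k).x ≤ padicValInt p (u ^ j).x + padicValNat p k := by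
  classical
  have hex : ∃ m, (p : ℤ) ∣ (u ^ m).x := ⟨j, hj⟩
  set ρ := Nat.find hex
  have hρ : (p : ℤ) ∣ (u ^ ρ).x := Nat.find_spec hex
  have hodd (m : ℕ) (hm : (p : ℤ) ∣ (u ^ m).x) : ∃ q, m = ρ * (2 * q + 1) := by
    have := u.mod_two_mul_eq_of_dvd_x_pow hρ (fun _ => Nat.find_min hex) hm
    exact ⟨m / (2 * ρ), by nlinarith [Nat.mod_add_div m (2 * ρ)]⟩
  obtain ⟨qj, rfl⟩ := hodd j hj
  obtain ⟨qk, rfl⟩ := hodd k hk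
  have hρ0 : ρ ≠ 0 := u.ne_zero_of_dvd_x_pow hρ
  rw [u.padicValInt_x_pow_mul_odd hp hx hρ (odd_two_mul_add_one qj),
    u.padicValInt_x_pow_mul_odd hp hx hρ (odd_two_mul_add_one qk),
    padicValNat.mul hρ0 (by omega)]
  omega

end Solution₁

theorem IsFundamental.pow_x_le_x_pow {d : ℤ} {u : Solution₁ d} (h : IsFundamental u) (n : ℕ) :
    u.x ^ n ≤ (u ^ n).x := by
  induction n with
  | zero => simp
  | succ n ih =>
    have hy : 0 ≤ (u ^ n).y := by
      cases n with
      | zero => simp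
      | succ n => exact (Solution₁.y_pow_succ_pos h.x_pos h.2.1 n).le
    have hdy : 0 ≤ d * ((u ^ n).y * u.y) := by have := h.d_pos; have := h.2.1; positivity
    rw [pow_succ, pow_succ, Solution₁.x_mul]
    nlinarith [h.x_pos]

end Pell

theorem seven_mul_le_five_pow {t : ℕ} (ht : 2 ≤ t) : 7 * t ≤ 5 ^ t := by
  induction t, ht using Nat.le_induction with
  | base => norm_num
  | succ t _ ih => rw [pow_succ]; omega

theorem hundred_pow_lt_two_pow_five_pow {t : ℕ} (ht : 2 ≤ t) : 100 ^ t < 2 ^ 5 ^ t :=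
  calc 100 ^ t < 128 ^ t := Nat.pow_lt_pow_left (by norm_num) (by omega)
    _ = 2 ^ (7 * t) := by rw [pow_mul]; norm_num
    _ ≤ 2 ^ 5 ^ t := Nat.pow_le_pow_right (by norm_num) (seven_mul_le_five_pow ht)

theorem forty_five_hundred_ne_sq_of_even {t x : ℕ} (ht : 2 ≤ t) :
    (45 ^ (2 * t) - 1) * (100 ^ (2 * t) - 1) ≠ x ^ 2 := by
  have : Fact (Nat.Prime 5) := ⟨by norm_num⟩
  intro h
  rw [pow_mul', pow_mul'] at h
  obtain ⟨d, a, b, hd, hsq, ha, hb⟩ :=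
    exists_pell_solutions_of_mul_eq_sq (by positivity) (Nat.one_lt_pow (by omega) (by norm_num)) h
  obtain ⟨u, hu⟩ := Pell.IsFundamental.exists_of_not_isSquare hd hsq
  obtain ⟨j, hj⟩ := hu.eq_pow_of_nonneg (a := .mk _ _ ha) (by simp) (by simp)
  obtain ⟨k, hk⟩ := hu.eq_pow_of_nonneg (a := .mk _ _ hb) (by simp) (by simp)
  have hxj : (u ^ j).x = ((5 ^ t * 9 ^ t : ℕ) : ℤ) := by
    rw [← hj, Pell.Solution₁.x_mk, ← mul_pow]; norm_num
  have hxk : (u ^ k).x = ((5 ^ (2 * t) * 4 ^ t : ℕ) : ℤ) := by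
    rw [← hk, Pell.Solution₁.x_mk, pow_mul, ← mul_pow]; norm_num
  have hval := u.padicValInt_x_pow_le (p := 5) (by norm_num) hu.x_pos (j := j) (k := k)
    (by rw [hxj]; exact_mod_cast (dvd_pow_self 5 (by omega)).mul_right _)
    (by rw [hxk]; exact_mod_cast (dvd_pow_self 5 (by omega)).mul_right _)
  have h5 (c : ℕ) (hc : ¬5 ∣ c) : ¬5 ∣ c ^ t := fun h => hc (Nat.prime_five.dvd_of_dvd_pow h)
  rw [hxj, hxk, padicValInt.of_nat, padicValInt.of_nat,
    padicValNat_prime_pow_mul (h5 9 (by norm_num)),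
    padicValNat_prime_pow_mul (h5 4 (by norm_num))] at hval
  have hk0 : k ≠ 0 := by rintro rfl; simp at hval; omega
  have hk5 : 5 ^ t ≤ k := Nat.le_of_dvd (Nat.pos_of_ne_zero hk0)
    ((padicValNat_dvd_iff_le hk0).2 (by omega))
  have hgrowth : (2 : ℤ) ^ k ≤ ((100 ^ t : ℕ) : ℤ) :=
    calc (2 : ℤ) ^ k ≤ u.x ^ k := pow_le_pow_left₀ (by norm_num) (by linarith [hu.1]) k
      _ ≤ (u ^ k).x := hu.pow_x_le_x_pow k
      _ = ((100 ^ t : ℕ) : ℤ) := by rw [← hk, Pell.Solution₁.x_mk]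
  have : 2 ^ 5 ^ t ≤ 100 ^ t :=
    (Nat.pow_le_pow_right (by norm_num) hk5).trans (by exact_mod_cast hgrowth)
  exact absurd this (not_le.2 (hundred_pow_lt_two_pow_five_pow ht))

theorem stmt_5_general (n x : ℕ) (hn : 0 < n) :
    (45 ^ n - 1) * (100 ^ n - 1) = x ^ 2 ↔ n = 1 ∧ x = 66 := by
  refine ⟨fun h => ?_, by rintro ⟨rfl, rfl⟩; norm_num⟩
  obtain rfl : n = 1 := by
    by_contra hn1
    rcases Nat.even_or_odd' n with ⟨t, rfl | rfl⟩
    · rcases (show t = 1 ∨ 2 ≤ t by omega) with rfl | ht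
      · exact pow_sub_one_mul_pow_sub_one_ne_sq_of_pow_div_two_eq_neg_one (p := 7) (by norm_num)
          (by norm_num) (by decide) (by decide) (by decide) h
      · exact forty_five_hundred_ne_sq_of_even ht h
    · exact forty_five_hundred_ne_sq_of_odd (by omega) (odd_two_mul_add_one t) h
  refine ⟨rfl, Nat.pow_left_injective two_ne_zero ?_⟩
  simpa using h.symm

theorem stmt_5 (n x : ℕ) (hn : 0 < n) (hx : 0 < x) :
    (45 ^ n - 1) * (100 ^ n - 1) = x ^ 2 ↔ n = 1 ∧ x = 66 :=
  stmt_5_general n x hn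
end

section
/- Let a > 1 and b > 1 be integers with b even. Then the equation (a^n - 1)(b^{2n} a^n - 1) = x^2 has no solutions in positive integers n, x. -/
/-! Put `A = aⁿ` and `m = bⁿ`. If `(A - 1)(m²A - 1)` is a square, then `A - 1 = g s²` and
`m²A - 1 = g p²` for some `g`, and eliminating `A` gives `g (p - ms)(p + ms) = m² - 1`.
Hence `r = m - g s (p - ms)` solves the Pell equation `r² - (g²s² + g)(p - ms)² = 1`, whose
fundamental solution is `(2gs² + 1, 2s)`. Every solution is ± a power of it, so `2s ∣ p - ms`.
But `m` is even, so `m²A - 1`, hence `p`, hence `p - ms` is odd. -/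

namespace Pell

namespace Solution₁

variable {d : ℤ}

theorem y_dvd_y_pow (a : Solution₁ d) (n : ℕ) : a.y ∣ (a ^ n).y := by
  induction n with
  | zero => simp
  | succ n ih => rw [pow_succ, y_mul]; exact dvd_add (dvd_mul_left _ _) (ih.mul_right _)

theorem y_dvd_y_zpow (a : Solution₁ d) (n : ℤ) : a.y ∣ (a ^ n).y := by
  cases n with
  | ofNat n => simpa using a.y_dvd_y_pow n
  | negSucc n => simpa [zpow_negSucc, y_inv] using a.y_dvd_y_pow (n + 1)

end Solution₁

open Solution₁

theorem IsFundamental.y_dvd_y {a₁ : Solution₁ d} (h : IsFundamental a₁) (a : Solution₁ d) :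
    a₁.y ∣ a.y := by
  obtain ⟨n, rfl | rfl⟩ := h.eq_zpow_or_neg_zpow a
  · exact a₁.y_dvd_y_zpow n
  · simpa [y_neg] using a₁.y_dvd_y_zpow n

theorem isFundamental_two_mul_sq_add_one {g s : ℤ} (hg : 0 < g) (hs : 0 < s) :
    IsFundamental (mk (2 * g * s ^ 2 + 1) (2 * s) (by ring) : Solution₁ (g ^ 2 * s ^ 2 + g)) := by
  refine ⟨by simp only [x_mk]; nlinarith [mul_pos hg (pow_pos hs 2)],
    by simp only [y_mk]; positivity, fun {b} hb => ?_⟩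
  simp only [x_mk]
  have hbx := b.prop_x
  rw [← sq_abs b.y] at hbx
  have hy : 0 < |b.y| := abs_pos.2 (y_ne_zero_of_one_lt_x hb)
  rcases le_or_gt (2 * s) |b.y| with hys | hys
  · refine le_of_pow_le_pow_left₀ two_ne_zero (by linarith) ?_
    nlinarith [mul_le_mul hys hys (by positivity) hy.le]
  · -- otherwise `(g s |y|)² < x² < (g s |y| + 1)²`
    exfalso
    have hlo : g * s * |b.y| < b.x := lt_of_pow_lt_pow_left₀ 2 (by linarith) (by nlinarith)
    have hhi : b.x < g * s * |b.y| + 1 :=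
      lt_of_pow_lt_pow_left₀ 2 (by positivity)
        (by nlinarith [mul_pos (mul_pos hg hy) (sub_pos.2 hys)])
    omega

end Pell

open Pell Solution₁ in
theorem Int.two_mul_dvd_of_sq_eq_mul_sq_add_one {g s x y : ℤ} (hg : 0 < g) (hs : 0 < s)
    (h : x ^ 2 = (g ^ 2 * s ^ 2 + g) * y ^ 2 + 1) : 2 * s ∣ y :=
  (isFundamental_two_mul_sq_add_one hg hs).y_dvd_y (mk x y (by linear_combination h))

theorem Nat.exists_eq_mul_sq_of_mul_eq_sq_s12 {u v x : ℕ} (h : u * v = x ^ 2) :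
    ∃ g s p, u = g * s ^ 2 ∧ v = g * p ^ 2 := by
  rcases Nat.eq_zero_or_pos (u.gcd v) with h0 | hpos
  · obtain ⟨rfl, rfl⟩ := Nat.gcd_eq_zero_iff.1 h0
    exact ⟨0, 0, 0, by simp⟩
  obtain ⟨g, u, v, hg, hcop, rfl, rfl⟩ := Nat.exists_coprime' hpos
  obtain ⟨z, rfl⟩ : g ∣ x := (Nat.pow_dvd_pow_iff two_ne_zero).1 ⟨u * v, by rw [← h]; ring⟩
  have huv : u * v = z ^ 2 :=
    Nat.eq_of_mul_eq_mul_left (by positivity : 0 < g ^ 2) (by rw [← mul_pow, ← h]; ring)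
  obtain ⟨s, rfl⟩ := exists_eq_pow_of_mul_eq_pow (Nat.isUnit_iff.2 hcop) huv
  obtain ⟨p, rfl⟩ :=
    exists_eq_pow_of_mul_eq_pow (Nat.isUnit_iff.2 hcop.symm) ((mul_comm _ _).trans huv)
  exact ⟨g, s, p, mul_comm _ _, mul_comm _ _⟩

theorem Int.mul_sq_add_one_ne_sq_mul {g s p m : ℤ} (hg : 0 < g) (hs : 0 < s) (hp : 0 ≤ p)
    (hm : 0 < m) (hme : Even m) : g * p ^ 2 + 1 ≠ m ^ 2 * (g * s ^ 2 + 1) := by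
  intro h
  have hm1 : 1 < m := by obtain ⟨k, rfl⟩ := hme; omega
  have hdiff : g * (p ^ 2 - (m * s) ^ 2) = m ^ 2 - 1 := by linear_combination h
  have hlt : m * s < p := lt_of_pow_lt_pow_left₀ 2 hp (by nlinarith)
  have hp_odd : Odd p := by
    have : Odd (g * p ^ 2) := by
      rw [show g * p ^ 2 = m ^ 2 * (g * s ^ 2 + 1) - 1 by linarith]
      exact ((hme.pow_of_ne_zero two_ne_zero).mul_right _).sub_odd odd_one
    exact (Int.odd_pow' two_ne_zero).1 (Int.odd_mul.1 this).2
  have hpell : (m - s * g * (p - m * s)) ^ 2 = (g ^ 2 * s ^ 2 + g) * (p - m * s) ^ 2 + 1 := by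
    linear_combination (-1 : ℤ) * hdiff
  have heven : Even (p - m * s) := even_iff_two_dvd.2
    ((dvd_mul_right 2 s).trans (Int.two_mul_dvd_of_sq_eq_mul_sq_add_one hg hs hpell))
  exact Int.not_even_iff_odd.2 (hp_odd.sub_even (hme.mul_right s)) heven

theorem stmt_12 (a b : ℕ) (ha : 1 < a) (hb : 1 < b) (hbe : Even b) :
    ¬ ∃ (n x : ℕ), 0 < n ∧ 0 < x ∧ (a ^ n - 1) * (b ^ (2 * n) * a ^ n - 1) = x ^ 2 := by
  rintro ⟨n, x, hn, -, heq⟩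
  have hA : 1 < a ^ n := Nat.one_lt_pow hn.ne' ha
  obtain ⟨g, s, p, hu, hv⟩ := Nat.exists_eq_mul_sq_of_mul_eq_sq_s12 heq
  have hg : 0 < g := Nat.pos_of_ne_zero (by rintro rfl; omega)
  have hs : 0 < s := Nat.pos_of_ne_zero (by rintro rfl; rw [zero_pow two_ne_zero] at hu; omega)
  have hBA : 1 ≤ b ^ (2 * n) * a ^ n := Nat.one_le_iff_ne_zero.2 (by positivity)
  have key : g * p ^ 2 + 1 = (b ^ n) ^ 2 * (g * s ^ 2 + 1) := by
    have hA' : a ^ n = g * s ^ 2 + 1 := by omega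
    rw [← pow_mul, mul_comm n 2, ← hA']; omega
  exact Int.mul_sq_add_one_ne_sq_mul (g := g) (s := s) (p := p) (m := b ^ n)
    (by positivity) (by positivity) (by positivity) (by positivity)
    (by exact_mod_cast hbe.pow_of_ne_zero hn.ne') (by exact_mod_cast key)
end
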